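/- arXiv:2308.11061 — 2 statements merged into one kernel-verified Lean document; each statement's English description precedes it below -/
import Mathlib

section
/- For 0 ≤ i ≤ D (with the conventions E*_{−1} = 0 and E*_{D+1} = 0) the following linear relation holds: (2ϑ_i − β·ϑ_{i−1})·E*_i·A·E*_{i−1}·A·E*_i + (q − q^{−1})(q² − q^{−2})·E*_i·A·E*_i·A·E*_i + (2ϑ_i − β·ϑ_{i+1})·E*_i·A·E*_{i+1}·A·E*_i − (q − q^{−1})(q² − q^{−2})(q + q^{−1} + ϑ_i)·E*_i·A·E*_i + (q² − q^{−2})²·ϑ_i·E*_i = 0. -/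
/-!
Relative to the idempotents `E r`, the matrix `A` is diagonal and `B` is tridiagonal, while
`Z` sees only the diagonal blocks `E r B E r`. Hence the identity
`A²B - βABA + BA² + (q² - q⁻²)² B = (q - q⁻¹)(q² - q⁻²)((q + q⁻¹) Z - A Z)`
can be checked block by block: on the blocks `E r (·) E (r ± 1)` it is the quadratic relation
between consecutive eigenvalues `ϑ r = u + u⁻¹`, `ϑ (r + 1) = u q² + (u q²)⁻¹`, and on the
diagonal blocks it is a scalar identity in `q` and `ϑ r`. Compressing this identity by `E* i`,
on which `B` acts as `ϑ i` and through which `A` is tridiagonal, gives the linear relation.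
-/

open Matrix Finset

section OrthogonalIdempotents

variable {K R ι : Type*} [CommSemiring K] [Semiring R] [Algebra K R]
  {S : Finset ι} {E : ι → R}

theorem mul_sum_smul_of_orthogonal [DecidableEq ι]
    (hmul : ∀ i ∈ S, ∀ j ∈ S, E i * E j = if i = j then E i else 0)
    (c : ι → K) {r : ι} (hr : r ∈ S) : E r * ∑ j ∈ S, c j • E j = c r • E r := by
  rw [Finset.mul_sum, Finset.sum_eq_single_of_mem r hr]
  · rw [mul_smul_comm, hmul r hr r hr, if_pos rfl]
  · intro j hj hjr
    rw [mul_smul_comm, hmul r hr j hj, if_neg (Ne.symm hjr), smul_zero]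

theorem sum_smul_mul_of_orthogonal [DecidableEq ι]
    (hmul : ∀ i ∈ S, ∀ j ∈ S, E i * E j = if i = j then E i else 0)
    (c : ι → K) {s : ι} (hs : s ∈ S) : (∑ j ∈ S, c j • E j) * E s = c s • E s := by
  rw [Finset.sum_mul, Finset.sum_eq_single_of_mem s hs]
  · rw [smul_mul_assoc, hmul s hs s hs, if_pos rfl]
  · intro j hj hjs
    rw [smul_mul_assoc, hmul j hj s hs, if_neg hjs, smul_zero]

theorem eq_of_forall_mul_mul_eq (hsum : ∑ i ∈ S, E i = 1) {x y : R}
    (h : ∀ r ∈ S, ∀ s ∈ S, E r * x * E s = E r * y * E s) : x = y := by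
  have expand (z : R) : z = ∑ r ∈ S, ∑ s ∈ S, E r * z * E s := by
    rw [← Finset.sum_mul_sum, ← Finset.sum_mul, hsum, one_mul, mul_one]
  rw [expand x, expand y]
  exact sum_congr rfl fun r hr => sum_congr rfl fun s hs => h r hr s hs

end OrthogonalIdempotents

theorem sum_Icc_eq_add_add_of_far_eq_zero {M : Type*} [AddCommMonoid M] {D i : ℤ}
    (hi : i ∈ Icc 0 D) {f : ℤ → M} (hf : ∀ j ∈ Icc 0 D, 1 < |i - j| → f j = 0)
    (hneg : f (-1) = 0) (htop : f (D + 1) = 0) :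
    ∑ j ∈ Icc 0 D, f j = f (i - 1) + f i + f (i + 1) := by
  rw [mem_Icc] at hi
  have hboundary : ∀ j ∈ Icc (-1) (D + 1), j ∉ Icc 0 D → f j = 0 := fun j hj hj' => by
    simp only [mem_Icc] at hj hj'
    obtain rfl | rfl : j = -1 ∨ j = D + 1 := by omega
    exacts [hneg, htop]
  have hnbhd : Icc (i - 1) (i + 1) = {i - 1, i, i + 1} := by ext; simp; omega
  calc ∑ j ∈ Icc 0 D, f j = ∑ j ∈ Icc (-1) (D + 1), f j :=
        sum_subset (Icc_subset_Icc (by omega) (by omega)) hboundary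
    _ = ∑ j ∈ Icc (i - 1) (i + 1), f j := by
        refine (sum_subset (Icc_subset_Icc (by omega) (by omega)) fun j hj hj' => ?_).symm
        by_cases hjD : j ∈ Icc 0 D
        · refine hf j hjD ?_
          rw [mem_Icc] at hj'
          rw [lt_abs]
          omega
        · exact hboundary j hj hjD
    _ = f (i - 1) + f i + f (i + 1) := by
        rw [hnbhd, sum_insert (by simp only [mem_insert, mem_singleton]; omega),
          sum_insert (by simp), sum_singleton, add_assoc]

theorem mul_sum_smul_mul_eq_of_tridiagonal {K R : Type*} [CommSemiring K] [Semiring R]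
    [Algebra K R] {D i : ℤ} (hi : i ∈ Icc 0 D) {E : ℤ → R} {A : R}
    (htri : ∀ j ∈ Icc 0 D, 1 < |i - j| → E i * A * E j = 0)
    (hneg : E (-1) = 0) (htop : E (D + 1) = 0) (c : ℤ → K) :
    E i * A * (∑ j ∈ Icc 0 D, c j • E j) * A * E i =
      c (i - 1) • (E i * A * E (i - 1) * A * E i) + c i • (E i * A * E i * A * E i)
        + c (i + 1) • (E i * A * E (i + 1) * A * E i) := by
  simp only [mul_sum, sum_mul, mul_smul_comm, smul_mul_assoc]
  refine sum_Icc_eq_add_add_of_far_eq_zero hi (fun j hj hij => ?_) ?_ ?_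
  · simp only [htri j hj hij, zero_mul, smul_zero]
  · simp only [hneg, mul_zero, zero_mul, smul_zero]
  · simp only [htop, mul_zero, zero_mul, smul_zero]

theorem theta_consecutive_relation {K : Type*} [Field K] {D : ℤ} {a q : K} (ha : a ≠ 0)
    (hq : q ≠ 0) {ϑ : ℤ → K}
    (hϑ : ∀ i, ϑ i = a * q ^ (2 * i - D) + a⁻¹ * q ^ (D - 2 * i)) (r : ℤ) :
    ϑ r ^ 2 - (q ^ 2 + (q ^ 2)⁻¹) * ϑ r * ϑ (r + 1) + ϑ (r + 1) ^ 2
      + (q ^ 2 - (q ^ 2)⁻¹) ^ 2 = 0 := by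
  set u := a * q ^ (2 * r - D)
  have hu : u ≠ 0 := mul_ne_zero ha (zpow_ne_zero _ hq)
  have hϑr : ϑ r = u + u⁻¹ := by rw [hϑ, mul_inv, ← _root_.zpow_neg, neg_sub]
  have hϑsucc : ϑ (r + 1) = u * q ^ 2 + (u * q ^ 2)⁻¹ := by
    rw [hϑ, mul_inv, mul_inv, ← _root_.zpow_neg, neg_sub, ← zpow_natCast, ← _root_.zpow_neg,
      mul_assoc, mul_assoc, ← zpow_add₀ hq, ← zpow_add₀ hq]
    push_cast
    ring_nf
  rw [hϑr, hϑsucc]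
  field_simp
  ring

theorem askeyWilson_eq_of_eigenbasis {K R : Type*} [Field K] [Ring R] [Algebra K R]
    {q : K} (hq : q ≠ 0) (hq2 : q ^ 2 + 1 ≠ 0) {ϑ : ℤ → K}
    (hϑ : ∀ r, ϑ r ^ 2 - (q ^ 2 + (q ^ 2)⁻¹) * ϑ r * ϑ (r + 1) + ϑ (r + 1) ^ 2
      + (q ^ 2 - (q ^ 2)⁻¹) ^ 2 = 0)
    {S : Finset ℤ} {E : ℤ → R} (hsum : ∑ i ∈ S, E i = 1)
    (hmul : ∀ i ∈ S, ∀ j ∈ S, E i * E j = if i = j then E i else 0)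
    {A B Z : R} (hA : A = ∑ i ∈ S, ϑ i • E i)
    (htri : ∀ i ∈ S, ∀ j ∈ S, 1 < |i - j| → E i * B * E j = 0)
    (hZ : ∀ i ∈ S, E i * Z = (1 + ϑ i / (q + q⁻¹)) • (E i * B * E i)) :
    A * A * B - (q ^ 2 + (q ^ 2)⁻¹) • (A * B * A) + B * (A * A)
      + (q ^ 2 - (q ^ 2)⁻¹) ^ 2 • B
        = ((q - q⁻¹) * (q ^ 2 - (q ^ 2)⁻¹)) • ((q + q⁻¹) • Z - A * Z) := by
  refine eq_of_forall_mul_mul_eq hsum fun r hr s hs => ?_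
  have hEA (Y : R) : E r * (A * Y) = ϑ r • (E r * Y) := by
    rw [← mul_assoc, hA, mul_sum_smul_of_orthogonal hmul ϑ hr, smul_mul_assoc]
  have hAE : A * E s = ϑ s • E s := by rw [hA, sum_smul_mul_of_orthogonal hmul ϑ hs]
  have hEZE : E r * (Z * E s) =
      if r = s then (1 + ϑ r / (q + q⁻¹)) • (E r * (B * E s)) else 0 := by
    rw [← mul_assoc, hZ r hr, smul_mul_assoc, mul_assoc, mul_assoc, hmul r hr s hs]
    split_ifs with hrs
    · rw [hrs]
    · rw [mul_zero, mul_zero, smul_zero]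
  simp only [mul_sub, sub_mul, mul_add, add_mul, smul_sub, mul_smul_comm, smul_mul_assoc,
    mul_assoc, hAE, hEA, hEZE, smul_smul]
  split_ifs with hrs
  · subst hrs
    match_scalars
    field_simp
    ring
  · simp only [smul_zero, sub_zero]
    obtain rfl | rfl | hfar : s = r + 1 ∨ r = s + 1 ∨ 1 < |r - s| := by rw [lt_abs]; omega
    · match_scalars
      linear_combination hϑ r
    · match_scalars
      linear_combination hϑ s
    · simp only [← mul_assoc, htri r hr s hs hfar, smul_zero, add_zero, sub_zero]

theorem sandwich_eq_zero_of_askeyWilson_eq {K R : Type*} [Field K] [Ring R] [Algebra K R]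
    {q : K} (hq : q ≠ 0) (hq2 : q ^ 2 + 1 ≠ 0) {ϑ : ℤ → K} {D : ℤ} {E : ℤ → R}
    (hsum : ∑ i ∈ Icc 0 D, E i = 1)
    (hmul : ∀ i ∈ Icc 0 D, ∀ j ∈ Icc 0 D, E i * E j = if i = j then E i else 0)
    (hneg : E (-1) = 0) (htop : E (D + 1) = 0) {A B Z : R}
    (hB : B = ∑ i ∈ Icc 0 D, ϑ i • E i)
    (htri : ∀ i ∈ Icc 0 D, ∀ j ∈ Icc 0 D, 1 < |i - j| → E i * A * E j = 0)
    (hrel : A * A * B - (q ^ 2 + (q ^ 2)⁻¹) • (A * B * A) + B * (A * A)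
      + (q ^ 2 - (q ^ 2)⁻¹) ^ 2 • B
        = ((q - q⁻¹) * (q ^ 2 - (q ^ 2)⁻¹)) • ((q + q⁻¹) • Z - A * Z))
    {i : ℤ} (hi : i ∈ Icc 0 D)
    (hZ : Z * E i = (1 + ϑ i / (q + q⁻¹)) • (E i * A * E i)) :
    (2 * ϑ i - (q ^ 2 + (q ^ 2)⁻¹) * ϑ (i - 1)) • (E i * A * E (i - 1) * A * E i)
      + ((q - q⁻¹) * (q ^ 2 - (q ^ 2)⁻¹)) • (E i * A * E i * A * E i)
      + (2 * ϑ i - (q ^ 2 + (q ^ 2)⁻¹) * ϑ (i + 1)) • (E i * A * E (i + 1) * A * E i)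
      - ((q - q⁻¹) * (q ^ 2 - (q ^ 2)⁻¹) * (q + q⁻¹ + ϑ i)) • (E i * A * E i)
      + ((q ^ 2 - (q ^ 2)⁻¹) ^ 2 * ϑ i) • E i = 0 := by
  have hEE : E i * E i = E i := by rw [hmul i hi i hi, if_pos rfl]
  have hEEY (Y : R) : E i * (E i * Y) = E i * Y := by rw [← mul_assoc, hEE]
  have hEB (Y : R) : E i * (B * Y) = ϑ i • (E i * Y) := by
    rw [← mul_assoc, hB, mul_sum_smul_of_orthogonal hmul ϑ hi, smul_mul_assoc]
  have hBE : B * E i = ϑ i • E i := by rw [hB, sum_smul_mul_of_orthogonal hmul ϑ hi]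
  have hAA := mul_sum_smul_mul_eq_of_tridiagonal hi (htri i hi) hneg htop (fun _ => (1 : K))
  have hABA := mul_sum_smul_mul_eq_of_tridiagonal hi (htri i hi) hneg htop ϑ
  simp only [one_smul, hsum, ← hB] at hAA hABA
  have h := congr_arg (fun x => E i * x * E i) hrel
  simp only [mul_add, mul_sub, add_mul, sub_mul, mul_smul_comm, smul_mul_assoc, mul_assoc,
    one_mul] at h hAA hABA ⊢
  simp only [hBE, hEB, hEE, hEEY, hZ, hAA, hABA, mul_smul_comm, mul_assoc, smul_smul] at h
  linear_combination (norm := skip) h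
  match_scalars <;> field_simp <;> ring

theorem linear_relation_from_Z_general
    {X : Type*} [Fintype X] [DecidableEq X]
    (D : ℤ) (q a : ℂ) (hq : q ≠ 0) (ha : a ≠ 0)
    (hq2 : q ^ 2 ≠ -1)
    (ϑ : ℤ → ℂ)
    (hϑ : ∀ i : ℤ, ϑ i = a * q ^ (2 * i - D) + a⁻¹ * q ^ (D - 2 * i))
    (β : ℂ) (hβ : β = q ^ (2 : ℤ) + q ^ (-2 : ℤ))
    (E Estar : ℤ → Matrix X X ℂ)
    (hEsum : ∑ i ∈ Finset.Icc (0 : ℤ) D, E i = 1)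
    (hEmul : ∀ i ∈ Finset.Icc (0 : ℤ) D, ∀ j ∈ Finset.Icc (0 : ℤ) D,
      E i * E j = if i = j then E i else 0)
    (hEssum : ∑ i ∈ Finset.Icc (0 : ℤ) D, Estar i = 1)
    (hEsmul : ∀ i ∈ Finset.Icc (0 : ℤ) D, ∀ j ∈ Finset.Icc (0 : ℤ) D,
      Estar i * Estar j = if i = j then Estar i else 0)
    (A B : Matrix X X ℂ)
    (hA : A = ∑ i ∈ Finset.Icc (0 : ℤ) D, ϑ i • E i)
    (hB : B = ∑ i ∈ Finset.Icc (0 : ℤ) D, ϑ i • Estar i)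
    (htriE : ∀ i ∈ Finset.Icc (0 : ℤ) D, ∀ j ∈ Finset.Icc (0 : ℤ) D,
      1 < |i - j| → E i * B * E j = 0)
    (htriEs : ∀ i ∈ Finset.Icc (0 : ℤ) D, ∀ j ∈ Finset.Icc (0 : ℤ) D,
      1 < |i - j| → Estar i * A * Estar j = 0)
    (Z : Matrix X X ℂ)
    (hZE : ∀ i ∈ Finset.Icc (0 : ℤ) D,
      Z * E i = (1 + ϑ i / (q + q⁻¹)) • (E i * B * E i) ∧
      E i * Z = (1 + ϑ i / (q + q⁻¹)) • (E i * B * E i))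
    (hZEs : ∀ i ∈ Finset.Icc (0 : ℤ) D,
      Z * Estar i = (1 + ϑ i / (q + q⁻¹)) • (Estar i * A * Estar i) ∧
      Estar i * Z = (1 + ϑ i / (q + q⁻¹)) • (Estar i * A * Estar i))
    (hEneg : Estar (-1) = 0) (hEtop : Estar (D + 1) = 0) :
    ∀ i ∈ Finset.Icc (0 : ℤ) D,
      (2 * ϑ i - β * ϑ (i - 1)) • (Estar i * A * Estar (i - 1) * A * Estar i)
      + ((q - q⁻¹) * (q ^ (2 : ℤ) - q ^ (-2 : ℤ))) •
          (Estar i * A * Estar i * A * Estar i)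
      + (2 * ϑ i - β * ϑ (i + 1)) • (Estar i * A * Estar (i + 1) * A * Estar i)
      - ((q - q⁻¹) * (q ^ (2 : ℤ) - q ^ (-2 : ℤ)) * (q + q⁻¹ + ϑ i)) •
          (Estar i * A * Estar i)
      + ((q ^ (2 : ℤ) - q ^ (-2 : ℤ)) ^ 2 * ϑ i) • Estar i = 0 := by
  intro i hi
  have hq2' : q ^ 2 + 1 ≠ 0 := fun h => hq2 (eq_neg_of_add_eq_zero_left h)
  have hrel := askeyWilson_eq_of_eigenbasis hq hq2' (theta_consecutive_relation ha hq hϑ)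
    hEsum hEmul hA htriE fun r hr => (hZE r hr).2
  subst hβ
  simp only [_root_.zpow_neg, zpow_ofNat]
  exact sandwich_eq_zero_of_askeyWilson_eq hq hq2' hEssum hEsmul hEneg hEtop hB htriEs hrel hi
    (hZEs i hi).1

theorem linear_relation_from_Z
    {X : Type*} [Fintype X] [DecidableEq X] [Nonempty X]
    (D : ℤ) (hD : 3 ≤ D) (q a : ℂ) (hq : q ≠ 0) (ha : a ≠ 0)
    (hq1 : q ^ 2 ≠ 1) (hq2 : q ^ 2 ≠ -1)
    (ϑ : ℤ → ℂ)
    (hϑ : ∀ i : ℤ, ϑ i = a * q ^ (2 * i - D) + a⁻¹ * q ^ (D - 2 * i))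
    (β : ℂ) (hβ : β = q ^ (2 : ℤ) + q ^ (-2 : ℤ))
    (E Estar : ℤ → Matrix X X ℂ)
    (hEsum : ∑ i ∈ Finset.Icc (0 : ℤ) D, E i = 1)
    (hEmul : ∀ i ∈ Finset.Icc (0 : ℤ) D, ∀ j ∈ Finset.Icc (0 : ℤ) D,
      E i * E j = if i = j then E i else 0)
    (hEssum : ∑ i ∈ Finset.Icc (0 : ℤ) D, Estar i = 1)
    (hEsmul : ∀ i ∈ Finset.Icc (0 : ℤ) D, ∀ j ∈ Finset.Icc (0 : ℤ) D,
      Estar i * Estar j = if i = j then Estar i else 0)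
    (A B : Matrix X X ℂ)
    (hA : A = ∑ i ∈ Finset.Icc (0 : ℤ) D, ϑ i • E i)
    (hB : B = ∑ i ∈ Finset.Icc (0 : ℤ) D, ϑ i • Estar i)
    (htriE : ∀ i ∈ Finset.Icc (0 : ℤ) D, ∀ j ∈ Finset.Icc (0 : ℤ) D,
      1 < |i - j| → E i * B * E j = 0)
    (htriEs : ∀ i ∈ Finset.Icc (0 : ℤ) D, ∀ j ∈ Finset.Icc (0 : ℤ) D,
      1 < |i - j| → Estar i * A * Estar j = 0)
    (Z : Matrix X X ℂ)
    (hZE : ∀ i ∈ Finset.Icc (0 : ℤ) D,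
      Z * E i = (1 + ϑ i / (q + q⁻¹)) • (E i * B * E i) ∧
      E i * Z = (1 + ϑ i / (q + q⁻¹)) • (E i * B * E i))
    (hZEs : ∀ i ∈ Finset.Icc (0 : ℤ) D,
      Z * Estar i = (1 + ϑ i / (q + q⁻¹)) • (Estar i * A * Estar i) ∧
      Estar i * Z = (1 + ϑ i / (q + q⁻¹)) • (Estar i * A * Estar i))
    (hEneg : Estar (-1) = 0) (hEtop : Estar (D + 1) = 0) :
    ∀ i ∈ Finset.Icc (0 : ℤ) D,
      (2 * ϑ i - β * ϑ (i - 1)) • (Estar i * A * Estar (i - 1) * A * Estar i)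
      + ((q - q⁻¹) * (q ^ (2 : ℤ) - q ^ (-2 : ℤ))) •
          (Estar i * A * Estar i * A * Estar i)
      + (2 * ϑ i - β * ϑ (i + 1)) • (Estar i * A * Estar (i + 1) * A * Estar i)
      - ((q - q⁻¹) * (q ^ (2 : ℤ) - q ^ (-2 : ℤ)) * (q + q⁻¹ + ϑ i)) •
          (Estar i * A * Estar i)
      + ((q ^ (2 : ℤ) - q ^ (-2 : ℤ)) ^ 2 * ϑ i) • Estar i = 0 :=
  linear_relation_from_Z_general D q a hq ha hq2 ϑ hϑ β hβ E Estar hEsum hEmul hEssum hEsmul A B hA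
    hB htriE htriEs Z hZE hZEs hEneg hEtop
end

section
/- Fix 2 ≤ i ≤ D and assume the matrix identity E*_{i−1}·A·E*_{i−1}·A·E*_i·(1 + ϑ_{i−1}/(q+q^{−1})) = E*_{i−1}·A·E*_i·A·E*_i·(1 + ϑ_i/(q+q^{−1})) + ε·((ϑ_{i−1} − ϑ_i)/(q+q^{−1}))·E*_{i−1}·A·E*_i. Let y, z ∈ X with ∂(x,y) = i−1, ∂(x,z) = i, and ∂(y,z) = 2. Set n₁ = |{w ∈ X : ∂(x,w) = i−1, w adjacent to y, w adjacent to z}| and n₂ = |{w ∈ X : ∂(x,w) = i, w adjacent to y, w adjacent to z}|. If 2(q+q^{−1}) + ϑ_{i−1} + ϑ_i ≠ 0, then n₁ = (n₁+n₂)·(q + q^{−1} + ϑ_i)/(2(q+q^{−1}) + ϑ_{i−1} + ϑ_i) and n₂ = (n₁+n₂)·(q + q^{−1} + ϑ_{i−1})/(2(q+q^{−1}) + ϑ_{i−1} + ϑ_i). -/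
open Matrix Finset

/-!
Read the matrix identity at the entry `(y, z)`. Since the outer projections fix the rows at
level `i - 1` and the columns at level `i`, the entry of `E*_{i-1} A E*_j A E*_i` is the number of
common neighbours of `y` and `z` at level `j`, while the entry of `E*_{i-1} A E*_i` is `A y z = 0`
because `∂(y, z) = 2`. The identity therefore becomes
`(q + q⁻¹ + ϑ_{i-1}) n₁ = (q + q⁻¹ + ϑ_i) n₂`, and both formulas follow by elementary algebra.
-/

namespace SimpleGraph

variable {X : Type*} [Fintype X] [DecidableEq X] (G : SimpleGraph X) (R : Type*) [Semiring R]

/-- The dual idempotent `E*_j` with respect to the base vertex `x`. -/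
noncomputable def sphereProj (x : X) (j : ℕ) : Matrix X X R :=
  diagonal fun y => if G.dist x y = j then 1 else 0

variable {G R} {x y z : X} {j k : ℕ}

theorem sphereProj_mul_mul_sphereProj_apply (M : Matrix X X R)
    (hy : G.dist x y = j) (hz : G.dist x z = k) :
    (G.sphereProj R x j * M * G.sphereProj R x k) y z = M y z := by
  simp [sphereProj, mul_diagonal, diagonal_mul, hy, hz]

variable [DecidableRel G.Adj]

theorem adjMatrix_mul_sphereProj_mul_adjMatrix_apply (x y z : X) (j : ℕ) :
    (G.adjMatrix R * G.sphereProj R x j * G.adjMatrix R) y z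
      = #{w | G.dist x w = j ∧ G.Adj w y ∧ G.Adj w z} := by
  rw [Finset.natCast_card_filter, mul_apply]
  refine Finset.sum_congr rfl fun w _ => ?_
  by_cases hw : G.dist x w = j <;> by_cases hyw : G.Adj y w <;> by_cases hwz : G.Adj w z <;>
    simp [sphereProj, mul_diagonal, hw, hyw, hwz, G.adj_comm w y]

theorem sphereProj_adj_sphereProj_adj_sphereProj_apply (hy : G.dist x y = j)
    (hz : G.dist x z = k) (l : ℕ) :
    (G.sphereProj R x j * G.adjMatrix R * G.sphereProj R x l * G.adjMatrix R *
        G.sphereProj R x k) y z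
      = #{w | G.dist x w = l ∧ G.Adj w y ∧ G.Adj w z} := by
  rw [← adjMatrix_mul_sphereProj_mul_adjMatrix_apply,
    ← sphereProj_mul_mul_sphereProj_apply
      (G.adjMatrix R * G.sphereProj R x l * G.adjMatrix R) hy hz]
  simp only [Matrix.mul_assoc]

end SimpleGraph

theorem add_inv_ne_zero_of_sq_ne_neg_one {K : Type*} [Field K] {q : K} (hq : q ≠ 0)
    (hq2 : q ^ 2 ≠ -1) : q + q⁻¹ ≠ 0 := by
  contrapose! hq2
  field_simp at hq2
  linear_combination hq2

theorem eq_mul_div_and_eq_mul_div_of_one_add_div_mul_eq {K : Type*} [Field K]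
    {s c d n₁ n₂ : K} (hs : s ≠ 0) (hden : 2 * s + c + d ≠ 0)
    (h : (1 + c / s) * n₁ = (1 + d / s) * n₂) :
    n₁ = (n₁ + n₂) * (s + d) / (2 * s + c + d) ∧
      n₂ = (n₁ + n₂) * (s + c) / (2 * s + c + d) := by
  have hbalance : (s + c) * n₁ = (s + d) * n₂ := by
    field_simp at h
    linear_combination h
  rw [eq_div_iff hden, eq_div_iff hden]
  exact ⟨by linear_combination hbalance, by linear_combination -hbalance⟩

theorem distance_two_counts_general {X : Type*} [Fintype X] [DecidableEq X]
    (G : SimpleGraph X) [DecidableRel G.Adj]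
    (x : X)
    (q : ℂ) (hq : q ≠ 0) (hq2 : q ^ 2 ≠ -1)
    (ϑ : ℤ → ℂ)
    (ε : ℂ)
    (A : Matrix X X ℂ) (hAdef : A = G.adjMatrix ℂ)
    (Estar : ℕ → Matrix X X ℂ)
    (hEstar : ∀ j : ℕ, Estar j =
      Matrix.diagonal (fun y => if G.dist x y = j then (1 : ℂ) else 0))
    (i : ℕ)
    (hident :
      (1 + ϑ ((i : ℤ) - 1) / (q + q⁻¹)) •
          (Estar (i - 1) * A * Estar (i - 1) * A * Estar i)
        = (1 + ϑ (i : ℤ) / (q + q⁻¹)) •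
            (Estar (i - 1) * A * Estar i * A * Estar i)
          + (ε * ((ϑ ((i : ℤ) - 1) - ϑ (i : ℤ)) / (q + q⁻¹))) •
              (Estar (i - 1) * A * Estar i))
    (y z : X) (hy : G.dist x y = i - 1) (hz : G.dist x z = i) (hyz : G.dist y z = 2)
    (n₁ n₂ : ℕ)
    (hn₁ : n₁ = (Finset.univ.filter
      fun w => G.dist x w = i - 1 ∧ G.Adj w y ∧ G.Adj w z).card)
    (hn₂ : n₂ = (Finset.univ.filter
      fun w => G.dist x w = i ∧ G.Adj w y ∧ G.Adj w z).card)
    (hden : 2 * (q + q⁻¹) + ϑ ((i : ℤ) - 1) + ϑ (i : ℤ) ≠ 0) :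
    (n₁ : ℂ) = ((n₁ : ℂ) + (n₂ : ℂ)) * (q + q⁻¹ + ϑ (i : ℤ))
        / (2 * (q + q⁻¹) + ϑ ((i : ℤ) - 1) + ϑ (i : ℤ)) ∧
    (n₂ : ℂ) = ((n₁ : ℂ) + (n₂ : ℂ)) * (q + q⁻¹ + ϑ ((i : ℤ) - 1))
        / (2 * (q + q⁻¹) + ϑ ((i : ℤ) - 1) + ϑ (i : ℤ)) := by
  obtain rfl : Estar = G.sphereProj ℂ x := funext hEstar
  subst hAdef
  have hnonadj : ¬ G.Adj y z := fun h => by simp [SimpleGraph.dist_eq_one_iff_adj.mpr h] at hyz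
  have hentry := congrFun (congrFun hident y) z
  simp only [Matrix.smul_apply, Matrix.add_apply, smul_eq_mul,
    SimpleGraph.sphereProj_adj_sphereProj_adj_sphereProj_apply hy hz,
    SimpleGraph.sphereProj_mul_mul_sphereProj_apply _ hy hz, SimpleGraph.adjMatrix_apply,
    if_neg hnonadj, mul_zero, add_zero, ← hn₁, ← hn₂] at hentry
  exact eq_mul_div_and_eq_mul_div_of_one_add_div_mul_eq
    (add_inv_ne_zero_of_sq_ne_neg_one hq hq2) hden hentry

theorem distance_two_counts {X : Type*} [Fintype X] [DecidableEq X]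
    (G : SimpleGraph X) [DecidableRel G.Adj] (hconn : G.Connected)
    (x : X) (D : ℕ) (hD : 3 ≤ D)
    (q a : ℂ) (hq : q ≠ 0) (ha : a ≠ 0) (hq1 : q ^ 2 ≠ 1) (hq2 : q ^ 2 ≠ -1)
    (ϑ : ℤ → ℂ)
    (hϑ : ∀ k : ℤ, ϑ k = a * q ^ (2 * k - (D : ℤ)) + a⁻¹ * q ^ ((D : ℤ) - 2 * k))
    (ε : ℂ)
    (A : Matrix X X ℂ) (hAdef : A = G.adjMatrix ℂ)
    (Estar : ℕ → Matrix X X ℂ)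
    (hEstar : ∀ j : ℕ, Estar j =
      Matrix.diagonal (fun y => if G.dist x y = j then (1 : ℂ) else 0))
    (i : ℕ) (hi1 : 2 ≤ i) (hiD : i ≤ D)
    (hident :
      (1 + ϑ ((i : ℤ) - 1) / (q + q⁻¹)) •
          (Estar (i - 1) * A * Estar (i - 1) * A * Estar i)
        = (1 + ϑ (i : ℤ) / (q + q⁻¹)) •
            (Estar (i - 1) * A * Estar i * A * Estar i)
          + (ε * ((ϑ ((i : ℤ) - 1) - ϑ (i : ℤ)) / (q + q⁻¹))) •
              (Estar (i - 1) * A * Estar i))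
    (y z : X) (hy : G.dist x y = i - 1) (hz : G.dist x z = i) (hyz : G.dist y z = 2)
    (n₁ n₂ : ℕ)
    (hn₁ : n₁ = (Finset.univ.filter
      fun w => G.dist x w = i - 1 ∧ G.Adj w y ∧ G.Adj w z).card)
    (hn₂ : n₂ = (Finset.univ.filter
      fun w => G.dist x w = i ∧ G.Adj w y ∧ G.Adj w z).card)
    (hden : 2 * (q + q⁻¹) + ϑ ((i : ℤ) - 1) + ϑ (i : ℤ) ≠ 0) :
    (n₁ : ℂ) = ((n₁ : ℂ) + (n₂ : ℂ)) * (q + q⁻¹ + ϑ (i : ℤ))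
        / (2 * (q + q⁻¹) + ϑ ((i : ℤ) - 1) + ϑ (i : ℤ)) ∧
    (n₂ : ℂ) = ((n₁ : ℂ) + (n₂ : ℂ)) * (q + q⁻¹ + ϑ ((i : ℤ) - 1))
        / (2 * (q + q⁻¹) + ϑ ((i : ℤ) - 1) + ϑ (i : ℤ)) :=
  distance_two_counts_general G x q hq hq2 ϑ ε A hAdef Estar hEstar i hident y z hy hz hyz n₁ n₂ hn₁
    hn₂ hden
end
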